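/- arXiv:1512.05599 — 5 statements merged into one kernel-verified Lean document; each statement's English description precedes it below -/
import Mathlib

section
/- Let f : ℝⁿ → ℝⁿ be continuous, φ : ℝⁿ → ℝ continuous, and suppose there exist a continuously differentiable V : ℝⁿ → ℝ and a constant U such that f(x)·∇V(x) + φ(x) − U ≤ 0 for all x ∈ ℝⁿ. Then for every bounded solution x(t) of ẋ = f(x) (with both x(t) and V(x(t)) bounded in time), limsup_{T→∞} (1/T) ∫₀ᵀ φ(x(t)) dt ≤ U. -/
open Filter intervalIntegral

/-! Along a solution, `W t = V (x t) + ∫₀ᵗ φ (x s) ds - U t` has derivative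
`∇V(x)·f(x) + φ(x) - U ≤ 0`, so `W` is antitone and `∫₀ᵀ φ(x) ≤ U T + V(x 0) - V(x T)`.
Dividing by `T` and using the bound on `V(x t)` gives `U + 2M/T`, which tends to `U`; the
bound on `x` keeps the time averages bounded below, so that the `limsup` is not a junk value. -/

section Dissipation

variable {E : Type*} [NormedAddCommGroup E] [NormedSpace ℝ E]
  {f : E → E} {φ V : E → ℝ} {U : ℝ} {x : ℝ → E}

theorem antitone_storage_add_integral_sub (hφ : Continuous φ) (hV : Differentiable ℝ V)
    (hineq : ∀ y, fderiv ℝ V y (f y) + φ y - U ≤ 0) (hsol : ∀ t, HasDerivAt x (f (x t)) t) :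
    Antitone fun T => V (x T) + (∫ t in (0 : ℝ)..T, φ (x t)) - U * T := by
  have hx : Continuous x := continuous_iff_continuousAt.2 fun t => (hsol t).continuousAt
  refine antitone_of_hasDerivAt_nonpos (fun T => ?_) fun T => hineq (x T)
  have hVx : HasDerivAt (fun t => V (x t)) (fderiv ℝ V (x T) (f (x T))) T :=
    (hV (x T)).hasFDerivAt.comp_hasDerivAt T (hsol T)
  have hφx := ((hφ.comp hx).integral_hasStrictDerivAt 0 T).hasDerivAt
  have hU : HasDerivAt (fun t => U * t) U T := by simpa using (hasDerivAt_id T).const_mul U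
  exact (hVx.add hφx).sub hU

theorem integral_le_of_dissipation (hφ : Continuous φ) (hV : Differentiable ℝ V)
    (hineq : ∀ y, fderiv ℝ V y (f y) + φ y - U ≤ 0) (hsol : ∀ t, HasDerivAt x (f (x t)) t)
    {T : ℝ} (hT : 0 ≤ T) :
    ∫ t in (0 : ℝ)..T, φ (x t) ≤ U * T + (V (x 0) - V (x T)) := by
  have := antitone_storage_add_integral_sub hφ hV hineq hsol hT
  simp only [integral_same, mul_zero] at this
  linarith

theorem time_average_le_of_dissipation (hφ : Continuous φ) (hV : Differentiable ℝ V)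
    (hineq : ∀ y, fderiv ℝ V y (f y) + φ y - U ≤ 0) (hsol : ∀ t, HasDerivAt x (f (x t)) t)
    {M : ℝ} (hVM : ∀ t, 0 ≤ t → |V (x t)| ≤ M) {T : ℝ} (hT : 0 < T) :
    1 / T * ∫ t in (0 : ℝ)..T, φ (x t) ≤ U + 2 * M * T⁻¹ := by
  have hdiss := integral_le_of_dissipation hφ hV hineq hsol hT.le
  have hV0 := abs_le.1 (hVM 0 le_rfl)
  have hVT := abs_le.1 (hVM T hT.le)
  calc 1 / T * ∫ t in (0 : ℝ)..T, φ (x t) ≤ 1 / T * (U * T + 2 * M) := by gcongr; linarith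
    _ = U + 2 * M * T⁻¹ := by field_simp

end Dissipation

theorem le_time_average_of_le {g : ℝ → ℝ} (hg : Continuous g) {m : ℝ}
    (hm : ∀ t, 0 ≤ t → m ≤ g t) {T : ℝ} (hT : 0 < T) :
    m ≤ 1 / T * ∫ t in (0 : ℝ)..T, g t := by
  have h := integral_mono_on hT.le (intervalIntegrable_const (μ := MeasureTheory.volume) (c := m))
    (hg.intervalIntegrable 0 T) fun t ht => hm t ht.1
  rw [integral_const, smul_eq_mul, sub_zero] at h
  calc m = 1 / T * (T * m) := by field_simp
    _ ≤ 1 / T * ∫ t in (0 : ℝ)..T, g t := by gcongr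

theorem limsup_le_of_eventually_le_of_tendsto {ι α : Type*} [ConditionallyCompleteLinearOrder α]
    [TopologicalSpace α] [OrderTopology α] {l : Filter ι} [l.NeBot] {u v : ι → α} {a : α}
    (hu : l.IsCoboundedUnder (· ≤ ·) u) (huv : u ≤ᶠ[l] v) (hv : Tendsto v l (nhds a)) :
    limsup u l ≤ a :=
  (limsup_le_limsup huv hu hv.isBoundedUnder_le).trans hv.limsup_eq.le

theorem time_average_upper_bound_general
    {n : ℕ} (f : (Fin n → ℝ) → (Fin n → ℝ)) (φ : (Fin n → ℝ) → ℝ)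
    (V : (Fin n → ℝ) → ℝ) (U : ℝ)
    (hφ : Continuous φ) (hV : ContDiff ℝ 1 V)
    (hineq : ∀ x : Fin n → ℝ, fderiv ℝ V x (f x) + φ x - U ≤ 0)
    (x : ℝ → (Fin n → ℝ))
    (hsol : ∀ t : ℝ, HasDerivAt x (f (x t)) t)
    (hbdd : ∃ M : ℝ, ∀ t : ℝ, 0 ≤ t → ‖x t‖ ≤ M ∧ |V (x t)| ≤ M) :
    Filter.limsup (fun T : ℝ => (1 / T) * ∫ t in (0:ℝ)..T, φ (x t)) atTop ≤ U := by
  obtain ⟨M, hM⟩ := hbdd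
  have hx : Continuous x := continuous_iff_continuousAt.2 fun t => (hsol t).continuousAt
  obtain ⟨m, hm⟩ := (isCompact_closedBall (0 : Fin n → ℝ) M).bddBelow_image hφ.continuousOn
  have hφm : ∀ t, 0 ≤ t → m ≤ φ (x t) := fun t ht =>
    hm ⟨x t, by simpa using (hM t ht).1, rfl⟩
  have hlim : Tendsto (fun T : ℝ => U + 2 * M * T⁻¹) atTop (nhds U) := by
    simpa using (tendsto_inv_atTop_zero.const_mul (2 * M)).const_add U
  refine limsup_le_of_eventually_le_of_tendsto ?_ ?_ hlim
  · exact isCoboundedUnder_le_of_eventually_le atTop <|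
      (eventually_gt_atTop 0).mono fun T hT => le_time_average_of_le (hφ.comp hx) hφm hT
  · exact (eventually_gt_atTop 0).mono fun T hT =>
      time_average_le_of_dissipation hφ (hV.differentiable one_ne_zero) hineq hsol
        (fun t ht => (hM t ht).2) hT

/-- upper bound on time averages via a storage function.
If `f·∇V + φ - U ≤ 0` everywhere, then along any bounded solution of `ẋ = f(x)`,
`limsup (1/T) ∫₀ᵀ φ(x(t)) dt ≤ U`. -/
theorem time_average_upper_bound
    {n : ℕ} (f : (Fin n → ℝ) → (Fin n → ℝ)) (φ : (Fin n → ℝ) → ℝ)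
    (V : (Fin n → ℝ) → ℝ) (U : ℝ)
    (hf : Continuous f) (hφ : Continuous φ) (hV : ContDiff ℝ 1 V)
    (hineq : ∀ x : Fin n → ℝ, fderiv ℝ V x (f x) + φ x - U ≤ 0)
    (x : ℝ → (Fin n → ℝ))
    (hsol : ∀ t : ℝ, HasDerivAt x (f (x t)) t)
    (hbdd : ∃ M : ℝ, ∀ t : ℝ, 0 ≤ t → ‖x t‖ ≤ M ∧ |V (x t)| ≤ M) :
    Filter.limsup (fun T : ℝ => (1 / T) * ∫ t in (0:ℝ)..T, φ (x t)) atTop ≤ U :=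
  time_average_upper_bound_general f φ V U hφ hV hineq x hsol hbdd
end

section
/- Let f : ℝⁿ → ℝⁿ be continuous, φ : ℝⁿ → ℝ continuous, and suppose there exist a continuously differentiable V : ℝⁿ → ℝ and a constant L such that f(x)·∇V(x) + φ(x) − L ≥ 0 for all x ∈ ℝⁿ. Then for every bounded solution x(t) of ẋ = f(x) (with V(x(t)) bounded in time), liminf_{T→∞} (1/T) ∫₀ᵀ φ(x(t)) dt ≥ L. -/
/-!
Along the trajectory, `t ↦ V (x t) + ∫₀ᵗ φ (x s) ds - L t` has derivative
`∇V(x)·f(x) + φ(x) - L ≥ 0`, so it is monotone. Hence `∫₀ᵀ φ(x) ≥ L T - (V(x T) - V(x 0)) ≥ L T - 2M`,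
and dividing by `T` gives averages at least `L - 2M/T`. Boundedness of the trajectory also bounds
`φ(x t)` from above; this keeps the averages bounded above, without which `liminf` in `ℝ` would
take a junk value.
-/

open Filter intervalIntegral

theorem sub_le_integral_of_hasDerivAt_add_ge {W w ψ : ℝ → ℝ} {L a b : ℝ} (hab : a ≤ b)
    (hψ : Continuous ψ) (hW : ∀ t, HasDerivAt W (w t) t) (h : ∀ t, L ≤ w t + ψ t) :
    L * (b - a) - (W b - W a) ≤ ∫ t in a..b, ψ t := by
  have hmono : Monotone fun t => W t + (∫ s in a..t, ψ s) - L * t :=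
    monotone_of_hasDerivAt_nonneg (f' := fun t => w t + ψ t - L)
      (fun t => ((hW t).add (hψ.integral_hasStrictDerivAt a t).hasDerivAt).sub
        ((hasDerivAt_id' t).const_mul L) |>.congr_deriv (by ring))
      (fun t => sub_nonneg.2 (h t))
  have := hmono hab
  simp only [integral_same] at this
  linarith

theorem average_le_of_forall_le {ψ : ℝ → ℝ} {c T : ℝ} (hψ : Continuous ψ) (hT : 0 < T)
    (h : ∀ t ∈ Set.Icc 0 T, ψ t ≤ c) : (1 / T) * ∫ t in (0 : ℝ)..T, ψ t ≤ c := by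
  have hint : ∫ t in (0 : ℝ)..T, ψ t ≤ ∫ _ in (0 : ℝ)..T, c :=
    integral_mono_on hT.le (hψ.intervalIntegrable _ _) intervalIntegrable_const h
  rw [integral_const, smul_eq_mul, sub_zero] at hint
  rw [one_div_mul_eq_div, div_le_iff₀ hT]
  linarith

theorem le_liminf_of_eventually_sub_div_le {u : ℝ → ℝ} {L C : ℝ}
    (h : ∀ᶠ T in atTop, L - C / T ≤ u T) (hu : IsBoundedUnder (· ≤ ·) atTop u) :
    L ≤ liminf u atTop := by
  have hlim : Tendsto (fun T : ℝ => L - C / T) atTop (nhds L) := by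
    simpa using tendsto_const_nhds.sub ((tendsto_const_nhds (x := C)).div_atTop tendsto_id)
  calc L = liminf (fun T : ℝ => L - C / T) atTop := hlim.liminf_eq.symm
    _ ≤ liminf u atTop := liminf_le_liminf h hlim.isBoundedUnder_ge hu.isCoboundedUnder_ge

theorem time_average_lower_bound_general
    {n : ℕ} (f : (Fin n → ℝ) → (Fin n → ℝ)) (φ : (Fin n → ℝ) → ℝ)
    (V : (Fin n → ℝ) → ℝ) (L : ℝ)
    (hφ : Continuous φ) (hV : ContDiff ℝ 1 V)
    (hineq : ∀ x : Fin n → ℝ, fderiv ℝ V x (f x) + φ x - L ≥ 0)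
    (x : ℝ → (Fin n → ℝ))
    (hsol : ∀ t : ℝ, HasDerivAt x (f (x t)) t)
    (hbdd : ∃ M : ℝ, ∀ t : ℝ, 0 ≤ t → ‖x t‖ ≤ M ∧ |V (x t)| ≤ M) :
    L ≤ Filter.liminf (fun T : ℝ => (1 / T) * ∫ t in (0:ℝ)..T, φ (x t)) atTop := by
  obtain ⟨M, hM⟩ := hbdd
  have hx : Continuous x := continuous_iff_continuousAt.2 fun t => (hsol t).continuousAt
  have hVx (t : ℝ) : HasDerivAt (fun s => V (x s)) (fderiv ℝ V (x t) (f (x t))) t :=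
    (hV.differentiable one_ne_zero (x t)).hasFDerivAt.comp_hasDerivAt t (hsol t)
  obtain ⟨c, hc⟩ := (isCompact_closedBall 0 M).bddAbove_image hφ.continuousOn
  have hφc (t : ℝ) (ht : 0 ≤ t) : φ (x t) ≤ c :=
    hc ⟨x t, by simpa using (hM t ht).1, rfl⟩
  refine le_liminf_of_eventually_sub_div_le (C := 2 * M) ?_ ?_
  · filter_upwards [eventually_gt_atTop 0] with T hT
    have hint := sub_le_integral_of_hasDerivAt_add_ge (ψ := fun t => φ (x t)) (L := L) hT.le
      (hφ.comp hx) hVx fun t => by linarith [hineq (x t)]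
    have hV0 := abs_le.1 (hM 0 le_rfl).2
    have hVT := abs_le.1 (hM T hT.le).2
    rw [one_div_mul_eq_div, le_div_iff₀ hT, sub_mul, div_mul_cancel₀ _ hT.ne']
    simp only [sub_zero] at hint
    linarith
  · refine ⟨c, eventually_map.2 ?_⟩
    filter_upwards [eventually_gt_atTop 0] with T hT
    exact average_le_of_forall_le (hφ.comp hx) hT fun t ht => hφc t ht.1

/-- lower bound on time averages via a storage function.
If `f·∇V + φ - L ≥ 0` everywhere, then along any bounded solution of `ẋ = f(x)`,
`liminf (1/T) ∫₀ᵀ φ(x(t)) dt ≥ L`. -/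
theorem time_average_lower_bound
    {n : ℕ} (f : (Fin n → ℝ) → (Fin n → ℝ)) (φ : (Fin n → ℝ) → ℝ)
    (V : (Fin n → ℝ) → ℝ) (L : ℝ)
    (hf : Continuous f) (hφ : Continuous φ) (hV : ContDiff ℝ 1 V)
    (hineq : ∀ x : Fin n → ℝ, fderiv ℝ V x (f x) + φ x - L ≥ 0)
    (x : ℝ → (Fin n → ℝ))
    (hsol : ∀ t : ℝ, HasDerivAt x (f (x t)) t)
    (hbdd : ∃ M : ℝ, ∀ t : ℝ, 0 ≤ t → ‖x t‖ ≤ M ∧ |V (x t)| ≤ M) :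
    L ≤ Filter.liminf (fun T : ℝ => (1 / T) * ∫ t in (0:ℝ)..T, φ (x t)) atTop :=
  time_average_lower_bound_general f φ V L hφ hV hineq x hsol hbdd
end

section
/- Let f : ℝⁿ → ℝⁿ and φ : ℝⁿ → ℝ be continuous, let T ⊆ ℝⁿ, and suppose there exist a continuously differentiable V : ℝⁿ → ℝ and a constant U such that f(x)·∇V(x) + φ(x) − U ≤ 0 for all x ∈ T. Then for any bounded solution x(t) of ẋ = f(x) for which there exists t₀ ≥ 0 with x(t) ∈ T for all t ≥ t₀ (and V(x(t)) bounded), limsup_{T→∞} (1/T) ∫₀ᵀ φ(x(t)) dt ≤ U. -/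
open Filter intervalIntegral

/-!
Along the trajectory, `G(t) = V(x(t)) + ∫_{t₀}^t (φ(x(s)) - U) ds` has derivative
`∇V·f + φ - U ≤ 0` once `x` stays in `T`, so `∫_{t₀}^S (φ(x) - U) ≤ V(x(t₀)) - V(x(S)) ≤ 2M`.
Hence `∫_0^S (φ(x) - U)` is bounded above, and dividing by `S` kills both this constant and the
initial segment `[0, t₀]`.
-/

open Set in
theorem integral_sub_le_of_fderiv_add_sub_nonpos {E : Type*} [NormedAddCommGroup E]
    [NormedSpace ℝ E] {f : E → E} {φ V : E → ℝ} {x : ℝ → E} {U a b : ℝ} (hab : a ≤ b)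
    (hV : Differentiable ℝ V) (hsol : ∀ t ∈ Icc a b, HasDerivAt x (f (x t)) t)
    (hφx : IntervalIntegrable (fun t => φ (x t)) MeasureTheory.volume a b)
    (hle : ∀ t ∈ Ioo a b, fderiv ℝ V (x t) (f (x t)) + φ (x t) - U ≤ 0) :
    ∫ t in a..b, (φ (x t) - U) ≤ V (x a) - V (x b) := by
  have hVx : ∀ t ∈ Icc a b, HasDerivAt (fun t => -V (x t)) (-fderiv ℝ V (x t) (f (x t))) t :=
    fun t ht => ((hV (x t)).hasFDerivAt.comp_hasDerivAt t (hsol t ht)).neg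
  have hint : MeasureTheory.IntegrableOn (fun t => φ (x t) - U) (Icc a b) :=
    (intervalIntegrable_iff_integrableOn_Icc_of_le hab).1 (hφx.sub intervalIntegrable_const)
  have := integral_le_sub_of_hasDeriv_right_of_le hab
    (fun t ht => (hVx t ht).continuousAt.continuousWithinAt)
    (fun t ht => (hVx t (Ioo_subset_Icc_self ht)).hasDerivWithinAt) hint
    (fun t ht => by linarith [hle t ht])
  linarith

section Average

variable {h : ℝ → ℝ}

theorem average_eq_add_average_sub (hh : Continuous h) (U S : ℝ) (hS : S ≠ 0) :
    (1 / S) * ∫ t in (0:ℝ)..S, h t = U + (1 / S) * ∫ t in (0:ℝ)..S, (h t - U) := by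
  rw [integral_sub (hh.intervalIntegrable _ _) intervalIntegrable_const, integral_const,
    smul_eq_mul]
  field_simp
  ring

theorem isCoboundedUnder_le_average {m : ℝ} (hh : Continuous h) (hm : ∀ t, 0 ≤ t → m ≤ h t) :
    IsCoboundedUnder (· ≤ ·) atTop (fun S : ℝ => (1 / S) * ∫ t in (0:ℝ)..S, h t) := by
  refine isCoboundedUnder_le_of_eventually_le atTop (x := m) ?_
  filter_upwards [eventually_gt_atTop (0:ℝ)] with S hS
  have hint : ∫ _ in (0:ℝ)..S, m ≤ ∫ t in (0:ℝ)..S, h t :=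
    integral_mono_on hS.le intervalIntegrable_const (hh.intervalIntegrable _ _)
      fun t ht => hm t ht.1
  rw [integral_const, smul_eq_mul, sub_zero] at hint
  rw [one_div_mul_eq_div, le_div_iff₀ hS]
  linarith

theorem limsup_average_le_of_integral_sub_le {m U C t₀ : ℝ} (hh : Continuous h)
    (hm : ∀ t, 0 ≤ t → m ≤ h t) (hC : ∀ S, t₀ ≤ S → ∫ t in t₀..S, (h t - U) ≤ C) :
    limsup (fun S : ℝ => (1 / S) * ∫ t in (0:ℝ)..S, h t) atTop ≤ U := by
  set C' := (∫ t in (0:ℝ)..t₀, (h t - U)) + C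
  have hsub : Continuous fun t => h t - U := hh.sub continuous_const
  have hbound : ∀ᶠ S in atTop, (1 / S) * ∫ t in (0:ℝ)..S, h t ≤ U + C' / S := by
    filter_upwards [eventually_ge_atTop t₀, eventually_gt_atTop (0:ℝ)] with S ht₀S hS
    rw [average_eq_add_average_sub hh U S hS.ne', ← integral_add_adjacent_intervals
      (hsub.intervalIntegrable 0 t₀) (hsub.intervalIntegrable t₀ S), one_div_mul_eq_div]
    gcongr
    exact add_le_add_right (hC S ht₀S) _
  have hlim : Tendsto (fun S : ℝ => U + C' / S) atTop (nhds U) := by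
    simpa using tendsto_const_nhds.add (tendsto_const_nhds (x := C').div_atTop tendsto_id)
  calc limsup (fun S : ℝ => (1 / S) * ∫ t in (0:ℝ)..S, h t) atTop
      ≤ limsup (fun S : ℝ => U + C' / S) atTop :=
        limsup_le_limsup hbound (isCoboundedUnder_le_average hh hm) hlim.isBoundedUnder_le
    _ = U := hlim.limsup_eq

end Average

theorem time_average_upper_bound_local_general
    {n : ℕ} (f : (Fin n → ℝ) → (Fin n → ℝ)) (φ : (Fin n → ℝ) → ℝ)
    (T : Set (Fin n → ℝ)) (V : (Fin n → ℝ) → ℝ) (U : ℝ)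
    (hφ : Continuous φ) (hV : ContDiff ℝ 1 V)
    (hineq : ∀ x ∈ T, fderiv ℝ V x (f x) + φ x - U ≤ 0)
    (x : ℝ → (Fin n → ℝ))
    (hsol : ∀ t : ℝ, HasDerivAt x (f (x t)) t)
    (hbdd : ∃ M : ℝ, ∀ t : ℝ, 0 ≤ t → ‖x t‖ ≤ M ∧ |V (x t)| ≤ M ∧ |φ (x t)| ≤ M)
    (habs : ∃ t₀ : ℝ, 0 ≤ t₀ ∧ ∀ t : ℝ, t₀ ≤ t → x t ∈ T) :
    Filter.limsup (fun S : ℝ => (1 / S) * ∫ t in (0:ℝ)..S, φ (x t)) atTop ≤ U := by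
  obtain ⟨M, hM⟩ := hbdd
  obtain ⟨t₀, ht₀, hT⟩ := habs
  have hφx : Continuous fun t => φ (x t) :=
    hφ.comp (continuous_iff_continuousAt.2 fun t => (hsol t).continuousAt)
  refine limsup_average_le_of_integral_sub_le (m := -M) (C := 2 * M) (t₀ := t₀) hφx
    (fun t ht => neg_le_of_abs_le (hM t ht).2.2) fun S hS => ?_
  calc ∫ t in t₀..S, (φ (x t) - U)
      ≤ V (x t₀) - V (x S) :=
        integral_sub_le_of_fderiv_add_sub_nonpos hS (hV.differentiable one_ne_zero)
          (fun t _ => hsol t) (hφx.intervalIntegrable _ _)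
          fun t ht => hineq (x t) (hT t ht.1.le)
    _ ≤ 2 * M := by
        linarith [le_of_abs_le (hM t₀ ht₀).2.1, neg_le_of_abs_le (hM S (ht₀.trans hS)).2.1]

/-- local (absorbing-domain) version of the upper bound.
If `f·∇V + φ - U ≤ 0` holds on a set `T` which the bounded trajectory eventually
enters and never leaves, then `limsup (1/T) ∫₀ᵀ φ(x(t)) dt ≤ U`. -/
theorem time_average_upper_bound_local
    {n : ℕ} (f : (Fin n → ℝ) → (Fin n → ℝ)) (φ : (Fin n → ℝ) → ℝ)
    (T : Set (Fin n → ℝ)) (V : (Fin n → ℝ) → ℝ) (U : ℝ)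
    (hf : Continuous f) (hφ : Continuous φ) (hV : ContDiff ℝ 1 V)
    (hineq : ∀ x ∈ T, fderiv ℝ V x (f x) + φ x - U ≤ 0)
    (x : ℝ → (Fin n → ℝ))
    (hsol : ∀ t : ℝ, HasDerivAt x (f (x t)) t)
    (hbdd : ∃ M : ℝ, ∀ t : ℝ, 0 ≤ t → ‖x t‖ ≤ M ∧ |V (x t)| ≤ M ∧ |φ (x t)| ≤ M)
    (habs : ∃ t₀ : ℝ, 0 ≤ t₀ ∧ ∀ t : ℝ, t₀ ≤ t → x t ∈ T) :
    Filter.limsup (fun S : ℝ => (1 / S) * ∫ t in (0:ℝ)..S, φ (x t)) atTop ≤ U :=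
  time_average_upper_bound_local_general f φ T V U hφ hV hineq x hsol hbdd habs
end

section
/- For the van der Pol oscillator ẋ = y, ẏ = μ(1−x²)y − x with μ > 0, the set T_r = {(x,y) : x² + y² ≥ r²} is positively invariant for every 0 < r ≤ 1: any solution with x(t₀)² + y(t₀)² ≥ r² satisfies x(t)² + y(t)² ≥ r² for all t ≥ t₀. -/
/-!
The energy `E = x² + y²` satisfies `Ė = 2μ(1 - x²)y²`, which is nonnegative on the closed unit
disc, hence wherever `E ≤ r² ≤ 1`. A function whose derivative is nonnegative wherever it is at
most `r²` cannot fall below `r²`.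
-/

open Set Filter Topology

theorem le_image_of_deriv_right_nonneg_of_image_le {f f' : ℝ → ℝ} {a b c : ℝ}
    (hf : ContinuousOn f (Icc a b)) (hf' : ∀ t ∈ Ico a b, HasDerivWithinAt f (f' t) (Ici t) t)
    (ha : c ≤ f a) (bound : ∀ t ∈ Ico a b, f t ≤ c → 0 ≤ f' t) :
    ∀ ⦃t⦄, t ∈ Icc a b → c ≤ f t := by
  intro t ht
  -- The fences `c - ε (s - a)` have slope `-ε < 0`, which makes the sign condition on `f'`
  -- strict as the fencing theorem requires; then let `ε → 0`.
  have fence : ∀ ε > 0, c - ε * (t - a) ≤ f t := by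
    intro ε hε
    have hB : ∀ s, HasDerivAt (fun s => -c + ε * (s - a)) ε s := fun s => by
      simpa using ((hasDerivAt_id s).sub_const a).const_mul ε |>.const_add (-c)
    have := image_le_of_deriv_right_lt_deriv_boundary hf.neg (fun s hs => (hf' s hs).neg)
      (by simpa using ha) hB (fun s hs hfs => by
        simp only [Pi.neg_apply] at hfs
        have hs_le : f s ≤ c := by nlinarith [hs.1]
        linarith [bound s hs hs_le]) ht
    simp only [Pi.neg_apply] at this
    linarith
  have hlim : Tendsto (fun ε => c - ε * (t - a)) (𝓝[>] 0) (𝓝 c) := by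
    have : Continuous fun ε : ℝ => c - ε * (t - a) := by fun_prop
    simpa using (this.tendsto 0).mono_left nhdsWithin_le_nhds
  exact le_of_tendsto hlim (eventually_nhdsWithin_of_forall fence)

section VanDerPol

variable {μ : ℝ} {x y : ℝ → ℝ}

theorem hasDerivAt_vdp_energy
    (hx : ∀ t, HasDerivAt x (y t) t) (hy : ∀ t, HasDerivAt y (μ * (1 - x t ^ 2) * y t - x t) t)
    (t : ℝ) : HasDerivAt (fun t => x t ^ 2 + y t ^ 2) (2 * μ * (1 - x t ^ 2) * y t ^ 2) t :=
  (((hx t).fun_pow 2).add ((hy t).fun_pow 2)).congr_deriv (by ring)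

theorem vdp_energy_deriv_nonneg_of_sq_add_sq_le_one (hμ : 0 ≤ μ) {u v : ℝ}
    (h : u ^ 2 + v ^ 2 ≤ 1) :
    0 ≤ 2 * μ * (1 - u ^ 2) * v ^ 2 := by
  have : 0 ≤ 1 - u ^ 2 := by nlinarith [sq_nonneg v]
  positivity

end VanDerPol

/-- for the van der Pol oscillator `ẋ = y`, `ẏ = μ(1−x²)y − x`
with `μ > 0`, the set `{(x,y) : x² + y² ≥ r²}` is positively invariant for
every `0 < r ≤ 1`. -/
theorem vdp_absorbing_domain_positively_invariant
    (μ r : ℝ) (hμ : 0 < μ) (hr : 0 < r) (hr1 : r ≤ 1)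
    (x y : ℝ → ℝ)
    (hx : ∀ t : ℝ, HasDerivAt x (y t) t)
    (hy : ∀ t : ℝ, HasDerivAt y (μ * (1 - (x t) ^ 2) * y t - x t) t)
    (t₀ : ℝ) (h0 : r ^ 2 ≤ (x t₀) ^ 2 + (y t₀) ^ 2) :
    ∀ t : ℝ, t₀ ≤ t → r ^ 2 ≤ (x t) ^ 2 + (y t) ^ 2 := by
  intro t ht
  have hr2 : r ^ 2 ≤ 1 := pow_le_one₀ hr.le hr1
  have hE := hasDerivAt_vdp_energy hx hy
  exact le_image_of_deriv_right_nonneg_of_image_le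
    (fun s _ => (hE s).continuousAt.continuousWithinAt) (fun s _ => (hE s).hasDerivWithinAt) h0
    (fun s _ hs => vdp_energy_deriv_nonneg_of_sq_add_sq_le_one hμ.le (hs.trans hr2)) ⟨ht, le_rfl⟩
end

section
/- Let P be a polynomial, z(x) a vector of monomials, and Q a symmetric matrix with smallest eigenvalue λ₀ ≥ 0, and let e(x) := z(x)ᵀQz(x) − P(x) be written as e(x) = z(x)ᵀEz(x) with |Eᵢⱼ| ≤ |r| for all i, j. If λ₀ − dim(Q)·|r| ≥ 0, then P(x) ≥ 0 for all x. -/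
open Matrix MvPolynomial

/-- rigorous nonnegativity certificate from an approximate Gram
decomposition. If `Q` is symmetric with all eigenvalues at least `λ₀ ≥ 0`, the
error `e = zᵀQz − P` can be written `zᵀEz` with `|Eᵢⱼ| ≤ |r|`, and
`λ₀ − dim(Q)·|r| ≥ 0`, then `P ≥ 0` everywhere. -/
theorem certified_nonnegativity_from_approximate_gram
    {n m : ℕ} (P : MvPolynomial (Fin n) ℝ)
    (z : Fin m → MvPolynomial (Fin n) ℝ)
    (Q E : Matrix (Fin m) (Fin m) ℝ) (lam0 r : ℝ)
    (hQsymm : Q.IsSymm)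
    (hlam0 : ∀ v : Fin m → ℝ, lam0 * (v ⬝ᵥ v) ≤ v ⬝ᵥ (Q *ᵥ v))
    (hE : ∀ i j : Fin m, |E i j| ≤ |r|)
    (he : (∑ i : Fin m, ∑ j : Fin m, MvPolynomial.C (Q i j) * z i * z j) - P =
          ∑ i : Fin m, ∑ j : Fin m, MvPolynomial.C (E i j) * z i * z j)
    (hcert : 0 ≤ lam0 - (m : ℝ) * |r|) :
    ∀ x : Fin n → ℝ, 0 ≤ MvPolynomial.eval x P := by
  intro x
  set v : Fin m → ℝ := fun i => MvPolynomial.eval x (z i) with hv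
  have hval := congrArg (MvPolynomial.eval x) he
  simp only [map_sub, map_sum, MvPolynomial.eval_mul, MvPolynomial.eval_C] at hval
  have hP : MvPolynomial.eval x P =
      (∑ i, ∑ j, Q i j * v i * v j) - (∑ i, ∑ j, E i j * v i * v j) := by
    simp only [hv]
    linarith
  have hQv : lam0 * (∑ i, v i ^ 2) ≤ ∑ i, ∑ j, Q i j * v i * v j := by
    have hl := hlam0 v
    simp only [dotProduct, mulVec] at hl
    calc lam0 * ∑ i, v i ^ 2 = lam0 * ∑ i, v i * v i := by
          simp [sq]
      _ ≤ ∑ i, v i * ∑ j, Q i j * v j := hl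
      _ = ∑ i, ∑ j, Q i j * v i * v j := by
          simp only [Finset.mul_sum]
          apply Finset.sum_congr rfl; intro i _
          apply Finset.sum_congr rfl; intro j _
          ring
  have hEv : |∑ i, ∑ j, E i j * v i * v j| ≤ |r| * (∑ i, |v i|) ^ 2 := by
    calc |∑ i, ∑ j, E i j * v i * v j| ≤ ∑ i, ∑ j, |E i j * v i * v j| := by
          refine (Finset.abs_sum_le_sum_abs _ _).trans ?_
          exact Finset.sum_le_sum fun i _ => Finset.abs_sum_le_sum_abs _ _
      _ ≤ ∑ i, ∑ j, |r| * (|v i| * |v j|) := by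
          refine Finset.sum_le_sum fun i _ => Finset.sum_le_sum fun j _ => ?_
          rw [abs_mul, abs_mul]
          have := mul_le_mul_of_nonneg_right (hE i j)
            (mul_nonneg (abs_nonneg (v i)) (abs_nonneg (v j)))
          linarith [this]
      _ = |r| * (∑ i, |v i|) ^ 2 := by
          rw [sq, Finset.sum_mul_sum]
          rw [Finset.mul_sum]
          refine Finset.sum_congr rfl fun i _ => ?_
          rw [Finset.mul_sum]
      _ ≤ |r| * (∑ i, |v i|) ^ 2 := le_refl _
  have hcs : (∑ i, |v i|) ^ 2 ≤ (m : ℝ) * ∑ i, v i ^ 2 := by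
    have := sq_sum_le_card_mul_sum_sq (s := Finset.univ) (f := fun i => |v i|)
    simpa [sq_abs] using this
  have hsumsq : (0:ℝ) ≤ ∑ i, v i ^ 2 := Finset.sum_nonneg fun i _ => sq_nonneg _
  have hEv2 : ∑ i, ∑ j, E i j * v i * v j ≤ |r| * ((m : ℝ) * ∑ i, v i ^ 2) := by
    have h1 := (le_abs_self _).trans hEv
    have h2 := mul_le_mul_of_nonneg_left hcs (abs_nonneg r)
    linarith
  rw [hP]
  nlinarith [mul_le_mul_of_nonneg_right hcert hsumsq]
end
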